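/- Let E be a real separable Hilbert space, δ > 0, 0 ≤ t ≤ T, and let m be a finite Borel measure on the interval [-δ,0]. Let ζ : [t,T+δ] → E be strongly measurable with ∫_{t}^{T+δ} ‖ζ(s)‖_E² ds < ∞ and with ζ(s) = 0 for almost every s ∈ (T, T+δ], and let λ : [t,T] → ℝ be nonnegative and non-decreasing. Then ∫_{t}^{T} λ(s) ‖ζ_{δ+}(s)‖_E² ds ≤ m([-δ,0])² · ∫_{t}^{T} λ(s) ‖ζ(s)‖_E² ds. -/

import Mathlib

/-!
Pointwise, Cauchy–Schwarz against the finite measure `m` gives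
`‖ζ_{δ+}(s)‖² ≤ m(ℝ) ∫ ‖ζ(s - r)‖² m(dr)`. After integrating against the weight `λ` and
exchanging the integrals, each delay `r ≤ 0` contributes
`∫ λ(s) ‖ζ(s - r)‖² ds = ∫ λ(u + r) ‖ζ(u)‖² du ≤ ∫ λ(u) ‖ζ(u)‖² du`, since `λ` is
non-decreasing. To run this argument on the whole line, `ζ` is truncated to `[t, T]`, which does
not change `ζ_{δ+}` on `[t, T]` because `ζ` vanishes on `(T, T + δ]`, and `λ` is extended
monotonically off `[t, T]`.
-/

open MeasureTheory Set
open scoped ENNReal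

section CauchySchwarz

variable {α E : Type*} [MeasurableSpace α] [NormedAddCommGroup E] [NormedSpace ℝ E]

theorem sq_lintegral_le_measure_univ_mul (μ : Measure α) {g : α → ℝ≥0∞}
    (hg : AEMeasurable g μ) : (∫⁻ x, g x ∂μ) ^ 2 ≤ μ univ * ∫⁻ x, g x ^ 2 ∂μ := by
  have h := ENNReal.lintegral_mul_norm_pow_le (hg.pow_const 2)
    (aemeasurable_const (b := (1 : ℝ≥0∞))) (p := (2 : ℕ)⁻¹) (q := (2 : ℕ)⁻¹)
    (by positivity) (by positivity) (by norm_num)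
  simp only [ENNReal.pow_rpow_inv_natCast two_ne_zero, ENNReal.one_rpow, mul_one,
    lintegral_const, one_mul] at h
  calc (∫⁻ x, g x ∂μ) ^ 2
      ≤ ((∫⁻ x, g x ^ 2 ∂μ) ^ ((2 : ℕ) : ℝ)⁻¹ * μ univ ^ ((2 : ℕ) : ℝ)⁻¹) ^ 2 := by gcongr
    _ = μ univ * ∫⁻ x, g x ^ 2 ∂μ := by
      rw [mul_pow, ENNReal.rpow_inv_natCast_pow two_ne_zero,
        ENNReal.rpow_inv_natCast_pow two_ne_zero, mul_comm]

theorem enorm_integral_sq_le_measure_univ_mul (μ : Measure α) (g : α → E) :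
    ‖∫ x, g x ∂μ‖ₑ ^ 2 ≤ μ univ * ∫⁻ x, ‖g x‖ₑ ^ 2 ∂μ := by
  by_cases hg : AEStronglyMeasurable g μ
  · calc ‖∫ x, g x ∂μ‖ₑ ^ 2 ≤ (∫⁻ x, ‖g x‖ₑ ∂μ) ^ 2 := by
          gcongr; exact enorm_integral_le_lintegral_enorm g
      _ ≤ μ univ * ∫⁻ x, ‖g x‖ₑ ^ 2 ∂μ := sq_lintegral_le_measure_univ_mul μ hg.enorm
  · simp [integral_non_aestronglyMeasurable hg]

end CauchySchwarz

section MovingAverage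

variable {G E : Type*} [MeasurableSpace G] [AddGroup G] [MeasurableAdd₂ G]
  [NormedAddCommGroup E] [NormedSpace ℝ E] {ν μ : Measure G} [ν.IsAddRightInvariant]

theorem ae_integral_comp_sub_congr [MeasurableNeg G] [SFinite ν] [SFinite μ] {f g : G → E}
    (hfg : f =ᵐ[ν] g) : ∀ᵐ s ∂ν, ∫ r, f (s - r) ∂μ = ∫ r, g (s - r) ∂μ := by
  have h := (quasiMeasurePreserving_sub_of_right_invariant ν μ).ae_eq_comp hfg
  filter_upwards [Measure.ae_ae_of_ae_prod h] with s hs using integral_congr_ae hs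

variable [PartialOrder G] [AddLeftMono G] {w : G → ℝ≥0∞}

theorem lintegral_mul_comp_sub_le_of_nonpos (hw : Monotone w) (F : G → ℝ≥0∞) {r : G}
    (hr : r ≤ 0) : ∫⁻ s, w s * F (s - r) ∂ν ≤ ∫⁻ s, w s * F s ∂ν :=
  calc ∫⁻ s, w s * F (s - r) ∂ν = ∫⁻ s, w (s + r) * F s ∂ν := by
        rw [← lintegral_add_right_eq_self (μ := ν) _ r]; simp only [add_sub_cancel_right]
    _ ≤ ∫⁻ s, w s * F s ∂ν :=
        lintegral_mono fun s => by gcongr; exact hw (add_le_of_nonpos_right hr)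

theorem lintegral_mul_enorm_integral_comp_sub_sq_le [MeasurableNeg G] [SFinite ν]
    [IsFiniteMeasure μ] (hw : Monotone w) (hw_meas : Measurable w) {f : G → E}
    (hf : AEStronglyMeasurable f ν) (hμ : ∀ᵐ r ∂μ, r ≤ 0) :
    ∫⁻ s, w s * ‖∫ r, f (s - r) ∂μ‖ₑ ^ 2 ∂ν ≤ μ univ ^ 2 * ∫⁻ s, w s * ‖f s‖ₑ ^ 2 ∂ν := by
  have h_joint : AEMeasurable (Function.uncurry fun s r => w s * ‖f (s - r)‖ₑ ^ 2) (ν.prod μ) :=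
    (hw_meas.comp measurable_fst).aemeasurable.mul
      ((hf.comp_quasiMeasurePreserving
        (quasiMeasurePreserving_sub_of_right_invariant ν μ)).enorm.pow_const 2)
  calc ∫⁻ s, w s * ‖∫ r, f (s - r) ∂μ‖ₑ ^ 2 ∂ν
      ≤ ∫⁻ s, μ univ * ∫⁻ r, w s * ‖f (s - r)‖ₑ ^ 2 ∂μ ∂ν := lintegral_mono fun s => calc
        w s * ‖∫ r, f (s - r) ∂μ‖ₑ ^ 2 ≤ w s * (μ univ * ∫⁻ r, ‖f (s - r)‖ₑ ^ 2 ∂μ) := by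
          gcongr; exact enorm_integral_sq_le_measure_univ_mul μ _
        _ ≤ μ univ * ∫⁻ r, w s * ‖f (s - r)‖ₑ ^ 2 ∂μ := by
          rw [mul_left_comm]; gcongr; exact lintegral_const_mul_le _ _
    _ = μ univ * ∫⁻ r, ∫⁻ s, w s * ‖f (s - r)‖ₑ ^ 2 ∂ν ∂μ := by
      rw [lintegral_const_mul' _ _ (measure_ne_top μ univ), lintegral_lintegral_swap h_joint]
    _ ≤ μ univ * ∫⁻ _, ∫⁻ s, w s * ‖f s‖ₑ ^ 2 ∂ν ∂μ := by
      refine mul_le_mul_right (lintegral_mono_ae (hμ.mono fun r hr => ?_)) _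
      exact lintegral_mul_comp_sub_le_of_nonpos hw _ hr
    _ = μ univ ^ 2 * ∫⁻ s, w s * ‖f s‖ₑ ^ 2 ∂ν := by
      rw [lintegral_const, sq, mul_assoc, mul_comm (∫⁻ _, _ ∂ν)]

end MovingAverage

theorem integral_le_toReal_lintegral_ofReal {α : Type*} [MeasurableSpace α] {μ : Measure α}
    {F : α → ℝ} (hF : 0 ≤ᵐ[μ] F) : ∫ x, F x ∂μ ≤ (∫⁻ x, ENNReal.ofReal (F x) ∂μ).toReal := by
  by_cases h : AEStronglyMeasurable F μ
  · exact (integral_eq_lintegral_of_nonneg_ae hF h).le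
  · rw [integral_non_aestronglyMeasurable h]
    exact ENNReal.toReal_nonneg

theorem integral_le_mul_integral_of_lintegral_le {α : Type*} [MeasurableSpace α]
    {μ : Measure α} {F G : α → ℝ} {c : ℝ≥0∞} (hc : c ≠ ∞) (hF : 0 ≤ᵐ[μ] F) (hG : 0 ≤ᵐ[μ] G)
    (hG_int : Integrable G μ)
    (h : ∫⁻ x, ENNReal.ofReal (F x) ∂μ ≤ c * ∫⁻ x, ENNReal.ofReal (G x) ∂μ) :
    ∫ x, F x ∂μ ≤ c.toReal * ∫ x, G x ∂μ :=
  calc ∫ x, F x ∂μ ≤ (∫⁻ x, ENNReal.ofReal (F x) ∂μ).toReal :=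
        integral_le_toReal_lintegral_ofReal hF
    _ ≤ (c * ∫⁻ x, ENNReal.ofReal (G x) ∂μ).toReal :=
        ENNReal.toReal_mono (ENNReal.mul_ne_top hc hG_int.lintegral_lt_top.ne) h
    _ = c.toReal * ∫ x, G x ∂μ := by
        rw [ENNReal.toReal_mul, ← ofReal_integral_eq_lintegral_ofReal hG_int hG,
          ENNReal.toReal_ofReal (integral_nonneg_of_ae hG)]

theorem MeasureTheory.IntegrableOn.monotoneOn_mul {a b : ℝ} {g lam : ℝ → ℝ}
    (hg : IntegrableOn g (Icc a b)) (hlam : MonotoneOn lam (Icc a b)) :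
    IntegrableOn (fun s => lam s * g s) (Icc a b) := by
  refine hg.bdd_mul (c := max |lam a| |lam b|)
    (aemeasurable_restrict_of_monotoneOn measurableSet_Icc hlam).aestronglyMeasurable ?_
  filter_upwards [ae_restrict_mem measurableSet_Icc] with s hs
  have ha : a ∈ Icc a b := ⟨le_rfl, hs.1.trans hs.2⟩
  have hb : b ∈ Icc a b := ⟨hs.1.trans hs.2, le_rfl⟩
  exact abs_le_max_abs_abs (hlam ha hs hs.1) (hlam hs hb hs.2)

theorem ofReal_mul_norm_sq {E : Type*} [SeminormedAddGroup E] {a : ℝ} (ha : 0 ≤ a) (x : E) :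
    ENNReal.ofReal (a * ‖x‖ ^ 2) = ENNReal.ofReal a * ‖x‖ₑ ^ 2 := by
  rw [ENNReal.ofReal_mul ha, ENNReal.ofReal_pow (norm_nonneg x), ofReal_norm]

section Interval

variable {E : Type*} [NormedAddCommGroup E] [NormedSpace ℝ E]

theorem ae_restrict_integral_comp_sub_eq_indicator {m : Measure ℝ} [SFinite m] {δ t T : ℝ}
    (hδ : 0 ≤ δ) (hm : ∀ᵐ r ∂m, r ∈ Icc (-δ) 0) {ζ : ℝ → E}
    (hζ_zero : ∀ᵐ s ∂volume.restrict (Ioc T (T + δ)), ζ s = 0) :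
    ∀ᵐ s ∂volume.restrict (Icc t T),
      ∫ r, ζ (s - r) ∂m = ∫ r, (Icc t T).indicator ζ (s - r) ∂m := by
  have h_trunc : (Icc t (T + δ)).indicator ζ =ᵐ[volume] (Icc t T).indicator ζ := by
    filter_upwards [(ae_restrict_iff' measurableSet_Ioc).mp hζ_zero] with s hs
    simp only [indicator, mem_Icc]
    split_ifs with h₁ h₂ h₂
    · rfl
    · exact hs ⟨lt_of_not_ge fun h => h₂ ⟨h₁.1, h⟩, h₁.2⟩
    · exact absurd ⟨h₂.1, by linarith [h₂.2]⟩ h₁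
    · rfl
  filter_upwards [ae_restrict_mem measurableSet_Icc,
    ae_restrict_of_ae (ae_integral_comp_sub_congr (μ := m) h_trunc)] with s hs h_eq
  rw [← h_eq]
  refine integral_congr_ae (hm.mono fun r hr => (indicator_of_mem ?_ ζ).symm)
  exact ⟨by linarith [hs.1, hr.2], by linarith [hs.2, hr.1]⟩

theorem setIntegral_Icc_mul_norm_integral_comp_sub_indicator_sq_le {t T : ℝ} (htT : t ≤ T)
    {m : Measure ℝ} [IsFiniteMeasure m] (hm : ∀ᵐ r ∂m, r ≤ 0) {ζ : ℝ → E}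
    (hζ_meas : AEStronglyMeasurable ζ (volume.restrict (Icc t T)))
    (hζ_int : IntegrableOn (fun s => ‖ζ s‖ ^ 2) (Icc t T)) {lam : ℝ → ℝ}
    (hlam_nonneg : ∀ s ∈ Icc t T, 0 ≤ lam s) (hlam_mono : MonotoneOn lam (Icc t T)) :
    ∫ s in Icc t T, lam s * ‖∫ r, (Icc t T).indicator ζ (s - r) ∂m‖ ^ 2
      ≤ (m univ).toReal ^ 2 * ∫ s in Icc t T, lam s * ‖ζ s‖ ^ 2 := by
  set A := Icc t T
  have hA : MeasurableSet A := measurableSet_Icc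
  set f := A.indicator ζ
  set w := IccExtend htT fun s : A => lam s
  have hw_eq : EqOn w lam A := fun s hs => IccExtend_of_mem htT _ hs
  have hW_mono : Monotone fun s => ENNReal.ofReal (w s) := fun a b hab =>
    ENNReal.ofReal_le_ofReal ((monotoneOn_iff_monotone.mp hlam_mono).IccExtend htT hab)
  have h_nonneg (x : ℝ → E) : ∀ᵐ s ∂volume.restrict A, 0 ≤ lam s * ‖x s‖ ^ 2 :=
    (ae_restrict_mem hA).mono fun s hs => mul_nonneg (hlam_nonneg s hs) (sq_nonneg _)
  rw [← ENNReal.toReal_pow]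
  refine integral_le_mul_integral_of_lintegral_le (by finiteness) (h_nonneg _) (h_nonneg ζ)
    (hζ_int.monotoneOn_mul hlam_mono) ?_
  calc ∫⁻ s in A, ENNReal.ofReal (lam s * ‖∫ r, f (s - r) ∂m‖ ^ 2)
      = ∫⁻ s in A, ENNReal.ofReal (w s) * ‖∫ r, f (s - r) ∂m‖ₑ ^ 2 :=
        setLIntegral_congr_fun hA fun s hs => by
          rw [ofReal_mul_norm_sq (hlam_nonneg s hs), hw_eq hs]
    _ ≤ ∫⁻ s, ENNReal.ofReal (w s) * ‖∫ r, f (s - r) ∂m‖ₑ ^ 2 := setLIntegral_le_lintegral _ _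
    _ ≤ m univ ^ 2 * ∫⁻ s, ENNReal.ofReal (w s) * ‖f s‖ₑ ^ 2 :=
      lintegral_mul_enorm_integral_comp_sub_sq_le hW_mono hW_mono.measurable
        ((aestronglyMeasurable_indicator_iff hA).mpr hζ_meas) hm
    _ = m univ ^ 2 * ∫⁻ s in A, ENNReal.ofReal (lam s * ‖ζ s‖ ^ 2) := by
      rw [← lintegral_indicator hA]
      congr 2 with s
      by_cases hs : s ∈ A
      · simp [f, hs, hw_eq hs, ofReal_mul_norm_sq (hlam_nonneg s hs)]
      · simp [f, hs]

end Interval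

theorem anticipated_moving_average_estimate_vanishing_terminal_general
    {E : Type*} [NormedAddCommGroup E] [InnerProductSpace ℝ E]
    (δ t T : ℝ) (hδ : 0 < δ) (htT : t ≤ T)
    (m : Measure ℝ) [IsFiniteMeasure m] (hm : m (Set.Icc (-δ) 0)ᶜ = 0)
    (ζ : ℝ → E)
    (hζ_meas : AEStronglyMeasurable ζ (volume.restrict (Set.Icc t (T + δ))))
    (hζ_int : IntegrableOn (fun s => ‖ζ s‖ ^ 2) (Set.Icc t (T + δ)))
    (hζ_zero : ∀ᵐ s ∂(volume.restrict (Set.Ioc T (T + δ))), ζ s = 0)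
    (lam : ℝ → ℝ)
    (hlam_nonneg : ∀ s ∈ Set.Icc t T, 0 ≤ lam s)
    (hlam_mono : MonotoneOn lam (Set.Icc t T)) :
    ∫ s in Set.Icc t T, lam s * ‖∫ r, ζ (s - r) ∂m‖ ^ 2
      ≤ (m (Set.Icc (-δ) 0)).toReal ^ 2
          * ∫ s in Set.Icc t T, lam s * ‖ζ s‖ ^ 2 := by
  have hm_ae : ∀ᵐ r ∂m, r ∈ Icc (-δ) 0 := ae_iff.mpr hm
  have hA : Icc t T ⊆ Icc t (T + δ) := Icc_subset_Icc_right (by linarith)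
  have h_avg := ae_restrict_integral_comp_sub_eq_indicator (t := t) hδ.le hm_ae hζ_zero
  calc ∫ s in Icc t T, lam s * ‖∫ r, ζ (s - r) ∂m‖ ^ 2
      = ∫ s in Icc t T, lam s * ‖∫ r, (Icc t T).indicator ζ (s - r) ∂m‖ ^ 2 :=
        integral_congr_ae (h_avg.mono fun s hs => by simp only [hs])
    _ ≤ (m univ).toReal ^ 2 * ∫ s in Icc t T, lam s * ‖ζ s‖ ^ 2 :=
      setIntegral_Icc_mul_norm_integral_comp_sub_indicator_sq_le htT
        (hm_ae.mono fun r hr => hr.2) (hζ_meas.mono_set hA) (hζ_int.mono_set hA)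
        hlam_nonneg hlam_mono
    _ = (m (Icc (-δ) 0)).toReal ^ 2 * ∫ s in Icc t T, lam s * ‖ζ s‖ ^ 2 := by
      rw [measure_of_measure_compl_eq_zero hm]

/-- vanishing-terminal version of the anticipated delay estimate, used in the
a priori estimates for anticipated BSEEs. If moreover `ζ` vanishes a.e. on `(T, T+δ]`, then
the anticipated moving average `ζ_{δ+}(s) = ∫ ζ(s-r) m(dr)` satisfies
`∫_t^T lam(s) ‖ζ_{δ+}(s)‖² ds ≤ m([-δ,0])² ∫_t^T lam(s) ‖ζ(s)‖² ds`. -/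
theorem anticipated_moving_average_estimate_vanishing_terminal
    {E : Type*} [NormedAddCommGroup E] [InnerProductSpace ℝ E] [CompleteSpace E]
    [TopologicalSpace.SeparableSpace E]
    (δ t T : ℝ) (hδ : 0 < δ) (ht : 0 ≤ t) (htT : t ≤ T)
    (m : Measure ℝ) [IsFiniteMeasure m] (hm : m (Set.Icc (-δ) 0)ᶜ = 0)
    (ζ : ℝ → E)
    (hζ_meas : AEStronglyMeasurable ζ (volume.restrict (Set.Icc t (T + δ))))
    (hζ_int : IntegrableOn (fun s => ‖ζ s‖ ^ 2) (Set.Icc t (T + δ)))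
    (hζ_zero : ∀ᵐ s ∂(volume.restrict (Set.Ioc T (T + δ))), ζ s = 0)
    (lam : ℝ → ℝ)
    (hlam_nonneg : ∀ s ∈ Set.Icc t T, 0 ≤ lam s)
    (hlam_mono : MonotoneOn lam (Set.Icc t T)) :
    ∫ s in Set.Icc t T, lam s * ‖∫ r, ζ (s - r) ∂m‖ ^ 2
      ≤ (m (Set.Icc (-δ) 0)).toReal ^ 2
          * ∫ s in Set.Icc t T, lam s * ‖ζ s‖ ^ 2 :=
  anticipated_moving_average_estimate_vanishing_terminal_general δ t T hδ htT m hm ζ hζ_meas hζ_int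
    hζ_zero lam hlam_nonneg hlam_mono
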